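/- Under the general EMOT setting, for every positive continuous linear functional λ ∈ (C_{0:T})* one has P*(λ) = (S^U)*(λ_0,…,λ_T) + σ_A(λ), where λ_t denotes the restriction of λ to C_{0:t}, (S^U)*(λ_0,…,λ_T) := sup_{φ ∈ E} ( S^U(φ) − Σ_{t=0}^T λ_t(φ_t) ), and σ_A(λ) := sup_{z ∈ A} λ(z). If in addition λ(1) = 1, then (S^U)*(λ_0,…,λ_T) = D(λ_0,…,λ_T) := sup_{φ ∈ E} ( U(φ) − Σ_{t=0}^T λ_t(φ_t) ). -/
import Mathlib


open MeasureTheory Filter Topology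
open scoped ENNReal BigOperators

noncomputable section

namespace EMOT

/-- The nonnegative part of an extended real number, as an element of `ℝ≥0∞`. -/
def posPart (a : EReal) : ℝ≥0∞ := if a = ⊤ then ⊤ else ENNReal.ofReal a.toReal

/-- The (possibly infinite) integral of an `EReal`-valued function, defined as the
difference of the lower integrals of its positive and negative parts. -/
def eInt {X : Type} [MeasurableSpace X] (μ : Measure X) (f : X → EReal) : EReal :=
  ((∫⁻ x, posPart (f x) ∂μ : ℝ≥0∞) : EReal) - ((∫⁻ x, posPart (-(f x)) ∂μ : ℝ≥0∞) : EReal)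

variable {T d : ℕ}

/-- The path space `Ω = ∏_{t=0}^T ∏_{j=1}^d K_t^j`. -/
abbrev PathSpace (K : Fin (T + 1) → Fin d → Set ℝ) : Type :=
  { x : Fin (T + 1) → Fin d → ℝ // ∀ t j, x t j ∈ K t j }

variable (K : Fin (T + 1) → Fin d → Set ℝ)

/-- The weight `Σ_{t,j} |x_t^j|`. -/
def wt (x : PathSpace K) : ℝ := ∑ t, ∑ j, |x.1 t j|

/-- The partial weight `Σ_{s ≤ t, j} |x_s^j|`. -/
def wtTo (t : Fin (T + 1)) (x : PathSpace K) : ℝ :=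
  ∑ s ∈ Finset.univ.filter (fun s => s ≤ t), ∑ j, |x.1 s j|

/-- Membership in `C_{0:T}`: continuous with linear growth. -/
def memC (φ : PathSpace K → ℝ) : Prop :=
  Continuous φ ∧ ∃ M : ℝ, ∀ x, |φ x| ≤ M * (1 + wt K x)

/-- Membership in `B_{0:T}`: Borel measurable with linear growth. -/
def memB (φ : PathSpace K → ℝ) : Prop :=
  Measurable φ ∧ ∃ M : ℝ, ∀ x, |φ x| ≤ M * (1 + wt K x)

/-- Membership in `C_{0:t}`: continuous, growth controlled by the partial weight,
and depending only on the coordinates up to time `t`. -/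
def memCto (t : Fin (T + 1)) (φ : PathSpace K → ℝ) : Prop :=
  Continuous φ ∧ (∃ M : ℝ, ∀ x, |φ x| ≤ M * (1 + wtTo K t x)) ∧
    ∀ x y : PathSpace K, (∀ s, s ≤ t → x.1 s = y.1 s) → φ x = φ y

/-- The weighted sup-norm `‖φ‖_{0:T}`. -/
def wnorm (φ : PathSpace K → ℝ) : ℝ :=
  ⨆ x : PathSpace K, |φ x| / (1 + wt K x)

/-- The standing hypotheses of the general EMOT setting: closed nonempty factor sets,
vector subspaces `ℝ ⊆ E_t ⊆ C_{0:t}`, a proper concave functional `U` with `U(0) ∈ ℝ`,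
and a convex cone `A ⊆ C_{0:T}` with `0 ∈ A`. -/
structure IsSetting
    (E : Fin (T + 1) → Set (PathSpace K → ℝ))
    (U : (Fin (T + 1) → PathSpace K → ℝ) → EReal)
    (A : Set (PathSpace K → ℝ)) : Prop where
  K_nonempty : ∀ t j, (K t j).Nonempty
  K_closed : ∀ t j, IsClosed (K t j)
  E_subset : ∀ t, ∀ φ ∈ E t, memCto K t φ
  E_const : ∀ t (r : ℝ), (fun _ => r) ∈ E t
  E_add : ∀ t, ∀ φ ∈ E t, ∀ ψ ∈ E t, φ + ψ ∈ E t
  E_smul : ∀ t (r : ℝ), ∀ φ ∈ E t, r • φ ∈ E t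
  U_ne_top : ∀ φ, (∀ t, φ t ∈ E t) → U φ ≠ ⊤
  U_zero_real : U (fun _ _ => 0) ≠ ⊥
  U_concave : ∀ φ ψ, (∀ t, φ t ∈ E t) → (∀ t, ψ t ∈ E t) → ∀ a : ℝ, 0 ≤ a → a ≤ 1 →
    (a : EReal) * U φ + ((1 - a : ℝ) : EReal) * U ψ ≤
      U (fun t => a • φ t + (1 - a) • ψ t)
  A_subset : ∀ z ∈ A, memC K z
  A_zero : (fun _ => (0 : ℝ)) ∈ A
  A_add : ∀ z₁ ∈ A, ∀ z₂ ∈ A, z₁ + z₂ ∈ A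
  A_smul : ∀ c : ℝ, 0 < c → ∀ z ∈ A, c • z ∈ A

/-- Membership in `E = E_0 × … × E_T`. -/
def memE (E : Fin (T + 1) → Set (PathSpace K → ℝ))
    (φ : Fin (T + 1) → PathSpace K → ℝ) : Prop := ∀ t, φ t ∈ E t

/-- The generalized optimized certainty equivalent `S^U`. -/
def SU (U : (Fin (T + 1) → PathSpace K → ℝ) → EReal)
    (φ : Fin (T + 1) → PathSpace K → ℝ) : EReal :=
  ⨆ β : Fin (T + 1) → ℝ, (U (fun t x => φ t x + β t) - ((∑ t, β t : ℝ) : EReal))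

/-- The set `Φ_z(c)` of subhedging static parts. -/
def Phi (E : Fin (T + 1) → Set (PathSpace K → ℝ))
    (U : (Fin (T + 1) → PathSpace K → ℝ) → EReal)
    (z : PathSpace K → ℝ) (c : PathSpace K → EReal) :
    Set (Fin (T + 1) → PathSpace K → ℝ) :=
  { φ | memE K E φ ∧ SU K U φ ≠ ⊥ ∧
      ∀ x, (((∑ t, φ t x) + z x : ℝ) : EReal) ≤ c x }

/-- The primal (nonlinear subhedging) value `P(c)`, with the convention `sup ∅ = -∞`. -/
def P (E : Fin (T + 1) → Set (PathSpace K → ℝ))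
    (U : (Fin (T + 1) → PathSpace K → ℝ) → EReal)
    (A : Set (PathSpace K → ℝ)) (c : PathSpace K → EReal) : EReal :=
  ⨆ (z : PathSpace K → ℝ) (_ : -z ∈ A) (φ ∈ Phi K E U z c), SU K U φ

/-- `P` evaluated on a real-valued payoff. -/
def PB (E : Fin (T + 1) → Set (PathSpace K → ℝ))
    (U : (Fin (T + 1) → PathSpace K → ℝ) → EReal)
    (A : Set (PathSpace K → ℝ)) (c : PathSpace K → ℝ) : EReal :=
  P K E U A (fun x => ((c x : ℝ) : EReal))

/-- The penalization `D(Q)`, convex conjugate of `U`. -/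
def D (E : Fin (T + 1) → Set (PathSpace K → ℝ))
    (U : (Fin (T + 1) → PathSpace K → ℝ) → EReal)
    (Q : Measure (PathSpace K)) : EReal :=
  ⨆ (φ : Fin (T + 1) → PathSpace K → ℝ) (_ : memE K E φ),
    (U φ - ((∑ t, ∫ x, φ t x ∂Q : ℝ) : EReal))

/-- `Q ∈ Prob¹(Ω)`: a Borel probability measure integrating all coordinates. -/
def Prob1 (Q : Measure (PathSpace K)) : Prop :=
  IsProbabilityMeasure Q ∧ ∀ t j, Integrable (fun x : PathSpace K => x.1 t j) Q

/-- `Q ∈ A°`. -/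
def inPolar (A : Set (PathSpace K → ℝ)) (Q : Measure (PathSpace K)) : Prop :=
  ∀ z ∈ A, ∫ x, z x ∂Q ≤ 0

/-- `σ_A(Q) = sup_{z ∈ A} ∫ z dQ`. -/
def sigmaA (A : Set (PathSpace K → ℝ)) (Q : Measure (PathSpace K)) : EReal :=
  ⨆ (z : PathSpace K → ℝ) (_ : z ∈ A), ((∫ x, z x ∂Q : ℝ) : EReal)

/-- The growth/continuity assumption: there are compact sets `𝔎_t(n)` and nonnegative
functions `f_t^n ∈ E_t` dominating the weight off the compacts, with
`V(Γ f^n) = -U(-Γ f^n) → 0`. -/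
def Growth (E : Fin (T + 1) → Set (PathSpace K → ℝ))
    (U : (Fin (T + 1) → PathSpace K → ℝ) → EReal) : Prop :=
  ∃ (𝒦 : ℕ → Fin (T + 1) → Set (Fin d → ℝ)) (f : ℕ → Fin (T + 1) → PathSpace K → ℝ),
    (∀ n t, IsCompact (𝒦 n t)) ∧
    (∀ n t, f n t ∈ E t) ∧
    (∀ n t x, 0 ≤ f n t x) ∧
    (∀ n (x : PathSpace K), (¬ ∀ t, (fun j => x.1 t j) ∈ 𝒦 n t) →
      1 + wt K x ≤ ∑ t, f n t x) ∧
    (∀ Γ : ℝ, 0 < Γ →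
      Tendsto (fun n => - U (fun t x => -(Γ * f n t x))) atTop (nhds (0 : EReal)))

/-- Admissible dynamic trading strategies `H^d`. -/
def Adapted (Δ : Fin T → PathSpace K → Fin d → ℝ) : Prop :=
  ∀ t : Fin T, (∀ j, Continuous (fun x => Δ t x j)) ∧
    (∃ M : ℝ, ∀ x j, |Δ t x j| ≤ M) ∧
    (∀ x y : PathSpace K, (∀ s : Fin (T + 1), s ≤ t.castSucc → x.1 s = y.1 s) →
      Δ t x = Δ t y)

/-- The elementary stochastic integral `I^Δ`. -/
def stochInt (Δ : Fin T → PathSpace K → Fin d → ℝ) (x : PathSpace K) : ℝ :=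
  ∑ t : Fin T, ∑ j, Δ t x j * (x.1 t.succ j - x.1 t.castSucc j)

/-- Martingale measures: `Q ∈ Prob¹(Ω)` with `E_Q[I^Δ] = 0` for all `Δ ∈ H^d`. -/
def Mart (Q : Measure (PathSpace K)) : Prop :=
  Prob1 K Q ∧ ∀ Δ, Adapted K Δ → ∫ x, stochInt K Δ x ∂Q = 0

/-- The set of static parts of semistatic subhedging strategies for `c`. -/
def Ssub (E : Fin (T + 1) → Set (PathSpace K → ℝ))
    (U : (Fin (T + 1) → PathSpace K → ℝ) → EReal)
    (c : PathSpace K → EReal) : Set (Fin (T + 1) → PathSpace K → ℝ) :=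
  { φ | memE K E φ ∧ SU K U φ ≠ ⊥ ∧
      ∃ Δ, Adapted K Δ ∧ ∀ x, (((∑ t, φ t x) + stochInt K Δ x : ℝ) : EReal) ≤ c x }

/-- Linearity and norm-continuity of a functional on `C_{0:T}`. -/
def IsLinC (lam : (PathSpace K → ℝ) → ℝ) : Prop :=
  (∀ φ ψ, memC K φ → memC K ψ → lam (φ + ψ) = lam φ + lam ψ) ∧
  (∀ (r : ℝ) (φ : PathSpace K → ℝ), memC K φ → lam (r • φ) = r * lam φ) ∧
  (∃ M : ℝ, ∀ φ, memC K φ → |lam φ| ≤ M * wnorm K φ)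

/-- Positivity of a functional on `C_{0:T}`. -/
def IsPos (lam : (PathSpace K → ℝ) → ℝ) : Prop :=
  ∀ φ, memC K φ → (∀ x, 0 ≤ φ x) → 0 ≤ lam φ

/-- The convex conjugate `P*` of the primal functional `P`, on the dual of `C_{0:T}`. -/
def Pstar (E : Fin (T + 1) → Set (PathSpace K → ℝ))
    (U : (Fin (T + 1) → PathSpace K → ℝ) → EReal)
    (A : Set (PathSpace K → ℝ)) (lam : (PathSpace K → ℝ) → ℝ) : EReal :=
  ⨆ (c : PathSpace K → ℝ) (_ : memC K c), (PB K E U A c - ((lam c : ℝ) : EReal))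

/-- The conjugate `(S^U)*(λ_0,…,λ_T)`, where `λ_t` is the restriction of `λ` to `C_{0:t}`. -/
def SUstar (E : Fin (T + 1) → Set (PathSpace K → ℝ))
    (U : (Fin (T + 1) → PathSpace K → ℝ) → EReal)
    (lam : (PathSpace K → ℝ) → ℝ) : EReal :=
  ⨆ (φ : Fin (T + 1) → PathSpace K → ℝ) (_ : memE K E φ),
    (SU K U φ - ((∑ t, lam (φ t) : ℝ) : EReal))

/-- The penalization `D(λ_0,…,λ_T)` on dual elements. -/
def Dlam (E : Fin (T + 1) → Set (PathSpace K → ℝ))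
    (U : (Fin (T + 1) → PathSpace K → ℝ) → EReal)
    (lam : (PathSpace K → ℝ) → ℝ) : EReal :=
  ⨆ (φ : Fin (T + 1) → PathSpace K → ℝ) (_ : memE K E φ),
    (U φ - ((∑ t, lam (φ t) : ℝ) : EReal))

/-- The support function `σ_A(λ) = sup_{z ∈ A} λ(z)`. -/
def sigmaAlam (A : Set (PathSpace K → ℝ)) (lam : (PathSpace K → ℝ) → ℝ) : EReal :=
  ⨆ (z : PathSpace K → ℝ) (_ : z ∈ A), ((lam z : ℝ) : EReal)

/-- The weak topology `σ((C_{0:T})*, C_{0:T})` restricted to measures: the topology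
generated by the evaluation maps `Q ↦ ∫ φ dQ`, `φ ∈ C_{0:T}`. -/
def weakTop : TopologicalSpace (Measure (PathSpace K)) :=
  TopologicalSpace.induced
    (fun Q => fun φ : {φ : PathSpace K → ℝ // memC K φ} => ∫ x, φ.1 x ∂Q)
    inferInstance

/-! ### Auxiliary lemmas -/

section Aux

variable {T d : ℕ} {K : Fin (T + 1) → Fin d → Set ℝ}

lemma wt_nonneg (x : PathSpace K) : 0 ≤ wt K x :=
  Finset.sum_nonneg fun _ _ => Finset.sum_nonneg fun _ _ => abs_nonneg _

lemma wtTo_nonneg (t : Fin (T + 1)) (x : PathSpace K) : 0 ≤ wtTo K t x :=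
  Finset.sum_nonneg fun _ _ => Finset.sum_nonneg fun _ _ => abs_nonneg _

lemma wtTo_le_wt (t : Fin (T + 1)) (x : PathSpace K) : wtTo K t x ≤ wt K x :=
  Finset.sum_le_sum_of_subset_of_nonneg (Finset.filter_subset _ _)
    (fun _ _ _ => Finset.sum_nonneg fun _ _ => abs_nonneg _)

lemma memC_of_memCto {t : Fin (T + 1)} {φ : PathSpace K → ℝ} (h : memCto K t φ) :
    memC K φ := by
  obtain ⟨hc, ⟨M, hM⟩, -⟩ := h
  refine ⟨hc, max M 0, fun x => ?_⟩
  have h1 : (0:ℝ) ≤ 1 + wtTo K t x := by have := wtTo_nonneg t x; linarith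
  calc |φ x| ≤ M * (1 + wtTo K t x) := hM x
    _ ≤ max M 0 * (1 + wtTo K t x) := mul_le_mul_of_nonneg_right (le_max_left _ _) h1
    _ ≤ max M 0 * (1 + wt K x) :=
        mul_le_mul_of_nonneg_left (by have := wtTo_le_wt t x; linarith) (le_max_right _ _)

lemma memC_const (r : ℝ) : memC K (fun _ => r) := by
  refine ⟨continuous_const, |r|, fun x => ?_⟩
  nlinarith [wt_nonneg x, abs_nonneg r]

lemma memC_add' {φ ψ : PathSpace K → ℝ} (hφ : memC K φ) (hψ : memC K ψ) :
    memC K (fun x => φ x + ψ x) := by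
  obtain ⟨hc1, M1, hM1⟩ := hφ
  obtain ⟨hc2, M2, hM2⟩ := hψ
  refine ⟨hc1.add hc2, M1 + M2, fun x => ?_⟩
  calc |φ x + ψ x| ≤ |φ x| + |ψ x| := abs_add_le _ _
    _ ≤ M1 * (1 + wt K x) + M2 * (1 + wt K x) := add_le_add (hM1 x) (hM2 x)
    _ = (M1 + M2) * (1 + wt K x) := by ring

lemma memC_smul' (r : ℝ) {φ : PathSpace K → ℝ} (hφ : memC K φ) :
    memC K (fun x => r * φ x) := by
  obtain ⟨hc, M, hM⟩ := hφ
  refine ⟨continuous_const.mul hc, |r| * M, fun x => ?_⟩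
  rw [abs_mul, mul_assoc]
  exact mul_le_mul_of_nonneg_left (hM x) (abs_nonneg r)

lemma memC_neg {φ : PathSpace K → ℝ} (hφ : memC K φ) :
    memC K (fun x => -(φ x)) := by
  have := memC_smul' (-1) hφ
  simpa [neg_one_mul] using this

lemma memC_sum (s : Finset (Fin (T + 1))) (φ : Fin (T + 1) → PathSpace K → ℝ)
    (h : ∀ t, memC K (φ t)) : memC K (fun x => ∑ t ∈ s, φ t x) := by
  induction s using Finset.cons_induction with
  | empty => simpa using memC_const (K := K) 0
  | cons a s ha ih =>
      have : (fun x => ∑ t ∈ Finset.cons a s ha, φ t x)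
          = fun x => φ a x + ∑ t ∈ s, φ t x := by
        funext x; rw [Finset.sum_cons]
      rw [this]
      exact memC_add' (h a) ih

variable {lam : (PathSpace K → ℝ) → ℝ}

lemma lam_zero (hlin : IsLinC K lam) : lam (fun _ => 0) = 0 := by
  have h := hlin.2.1 0 (fun _ => 0) (memC_const 0)
  have he : (0:ℝ) • (fun _ : PathSpace K => (0:ℝ)) = (fun _ : PathSpace K => (0:ℝ)) := by
    funext x; simp
  rw [he] at h
  simpa using h

lemma lam_add' (hlin : IsLinC K lam) {φ ψ : PathSpace K → ℝ}
    (hφ : memC K φ) (hψ : memC K ψ) :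
    lam (fun x => φ x + ψ x) = lam φ + lam ψ :=
  hlin.1 φ ψ hφ hψ

lemma lam_neg (hlin : IsLinC K lam) {φ : PathSpace K → ℝ} (hφ : memC K φ) :
    lam (fun x => -(φ x)) = -(lam φ) := by
  have h := hlin.2.1 (-1) φ hφ
  have he : (-1:ℝ) • φ = (fun x => -(φ x)) := by funext x; simp
  rw [he] at h
  rw [h]; ring

lemma lam_mono (hlin : IsLinC K lam) (hpos : IsPos K lam) {φ ψ : PathSpace K → ℝ}
    (hφ : memC K φ) (hψ : memC K ψ) (hle : ∀ x, φ x ≤ ψ x) : lam φ ≤ lam ψ := by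
  have hgC : memC K (fun x => ψ x + -(φ x)) := memC_add' hψ (memC_neg hφ)
  have hg0 : 0 ≤ lam (fun x => ψ x + -(φ x)) :=
    hpos _ hgC (fun x => by have := hle x; linarith)
  have hsum : lam (fun x => φ x + (ψ x + -(φ x))) = lam φ + lam (fun x => ψ x + -(φ x)) :=
    lam_add' hlin hφ hgC
  have hid : (fun x => φ x + (ψ x + -(φ x))) = ψ := by funext x; ring
  rw [hid] at hsum
  linarith

lemma lam_sum (hlin : IsLinC K lam) (s : Finset (Fin (T + 1)))
    (φ : Fin (T + 1) → PathSpace K → ℝ) (h : ∀ t, memC K (φ t)) :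
    lam (fun x => ∑ t ∈ s, φ t x) = ∑ t ∈ s, lam (φ t) := by
  induction s using Finset.cons_induction with
  | empty => simpa using lam_zero hlin
  | cons a s ha ih =>
      have he : (fun x => ∑ t ∈ Finset.cons a s ha, φ t x)
          = fun x => φ a x + ∑ t ∈ s, φ t x := by
        funext x; rw [Finset.sum_cons]
      rw [he, lam_add' hlin (h a) (memC_sum s φ h), ih, Finset.sum_cons]

/-! EReal arithmetic helpers -/

lemma er_sub_le_iff {a b : EReal} {r : ℝ} : a - (r : EReal) ≤ b ↔ a ≤ b + (r : EReal) :=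
  EReal.sub_le_iff_le_add (Or.inl (EReal.coe_ne_bot r)) (Or.inl (EReal.coe_ne_top r))

lemma er_sub_coe_add (a : EReal) (r s : ℝ) :
    a - ((r + s : ℝ) : EReal) = (a - (r : EReal)) + ((-s : ℝ) : EReal) := by
  rw [sub_eq_add_neg, sub_eq_add_neg, add_assoc]
  congr 1
  rw [← EReal.coe_neg, ← EReal.coe_neg, ← EReal.coe_add]
  norm_cast
  ring

lemma er_add_iSup_le {ι : Sort*} {a C : EReal} {f : ι → EReal}
    (h : ∀ i, a + f i ≤ C) : a + (⨆ i, f i) ≤ C := by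
  induction a using EReal.rec with
  | bot => simp [EReal.bot_add]
  | top =>
      by_cases hf : ∀ i, f i = ⊥
      · rw [iSup_eq_bot.mpr hf, EReal.add_bot]; exact bot_le
      · push_neg at hf
        obtain ⟨i, hi⟩ := hf
        have hC : (⊤ : EReal) ≤ C := by
          have h' := h i; rwa [EReal.top_add_of_ne_bot hi] at h'
        exact le_trans le_top hC
  | coe x =>
      rw [add_comm, ← EReal.le_sub_iff_add_le (Or.inl (EReal.coe_ne_bot x))
        (Or.inl (EReal.coe_ne_top x))]
      exact iSup_le fun i => (EReal.le_sub_iff_add_le (Or.inl (EReal.coe_ne_bot x))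
        (Or.inl (EReal.coe_ne_top x))).mpr (by rw [add_comm]; exact h i)

lemma er_iSup_add_le {ι : Sort*} {a C : EReal} {f : ι → EReal}
    (h : ∀ i, f i + a ≤ C) : (⨆ i, f i) + a ≤ C := by
  rw [add_comm]
  exact er_add_iSup_le fun i => by rw [add_comm]; exact h i

end Aux
/-- Lemma `propformaconiugata`: for every positive continuous linear
functional `λ` on `C_{0:T}`, `P*(λ) = (S^U)*(λ_0,…,λ_T) + σ_A(λ)`; if moreover
`λ(1) = 1`, then `(S^U)*(λ_0,…,λ_T) = D(λ_0,…,λ_T)`. -/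
theorem Pstar_eq_SUstar_add_sigmaA
    {T d : ℕ} (hT : 1 ≤ T) (hd : 1 ≤ d)
    (K : Fin (T + 1) → Fin d → Set ℝ)
    (E : Fin (T + 1) → Set (PathSpace K → ℝ))
    (U : (Fin (T + 1) → PathSpace K → ℝ) → EReal)
    (A : Set (PathSpace K → ℝ))
    (hS : IsSetting K E U A)
    (lam : (PathSpace K → ℝ) → ℝ)
    (hlin : IsLinC K lam) (hpos : IsPos K lam) :
    Pstar K E U A lam = SUstar K E U lam + sigmaAlam K A lam ∧
    (lam (fun _ => 1) = 1 → SUstar K E U lam = Dlam K E U lam) := by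
  have hmemc : ∀ t, ∀ φ ∈ E t, memC K φ :=
    fun t φ h => memC_of_memCto (hS.E_subset t φ h)
  constructor
  · -- Part 1
    apply le_antisymm
    · -- Pstar ≤ SUstar + sigmaA
      simp only [Pstar]
      refine iSup_le fun c => iSup_le fun hc => ?_
      rw [er_sub_le_iff]
      simp only [PB, P]
      refine iSup_le fun z => iSup_le fun hz => iSup_le fun φ => iSup_le fun hφ => ?_
      obtain ⟨hφE, hSUne, hineq⟩ := hφ
      rw [← er_sub_le_iff]
      have hpt : ∀ x, (∑ t, φ t x) + z x ≤ c x := fun x =>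
        EReal.coe_le_coe_iff.mp (hineq x)
      have hφC : ∀ t, memC K (φ t) := fun t => hmemc t (φ t) (hφE t)
      have hsumC : memC K (fun x => ∑ t, φ t x) := memC_sum _ _ hφC
      have hzC : memC K z := by
        have h1 : memC K (-z) := hS.A_subset _ hz
        have h2 : memC K (fun x => -((-z) x)) := memC_neg h1
        simpa using h2
      have hgC : memC K (fun x => (∑ t, φ t x) + z x) := memC_add' hsumC hzC
      have hlg : lam (fun x => (∑ t, φ t x) + z x) = (∑ t, lam (φ t)) + lam z := by
        rw [lam_add' hlin hsumC hzC, lam_sum hlin _ _ hφC]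
      have hmono : (∑ t, lam (φ t)) + lam z ≤ lam c := by
        rw [← hlg]; exact lam_mono hlin hpos hgC hc hpt
      have hnegz : lam (-z) = -(lam z) := lam_neg hlin hzC
      calc SU K U φ - ((lam c : ℝ) : EReal)
          ≤ SU K U φ - (((∑ t, lam (φ t)) + lam z : ℝ) : EReal) :=
            EReal.sub_le_sub le_rfl (EReal.coe_le_coe_iff.mpr hmono)
        _ = (SU K U φ - ((∑ t, lam (φ t) : ℝ) : EReal)) + ((-(lam z) : ℝ) : EReal) :=
            er_sub_coe_add _ _ _
        _ ≤ SUstar K E U lam + sigmaAlam K A lam := by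
            refine add_le_add ?_ ?_
            · simp only [SUstar]
              refine le_trans ?_ (le_iSup _ φ)
              refine le_trans ?_ (le_iSup _ hφE)
              exact le_rfl
            · rw [← hnegz]
              simp only [sigmaAlam]
              refine le_trans ?_ (le_iSup _ (-z))
              refine le_trans ?_ (le_iSup _ hz)
              exact le_rfl
    · -- SUstar + sigmaA ≤ Pstar
      simp only [SUstar, sigmaAlam]
      refine er_iSup_add_le fun φ => er_iSup_add_le fun hφE => ?_
      refine er_add_iSup_le fun z => er_add_iSup_le fun hz => ?_
      by_cases hb : SU K U φ = ⊥
      · rw [hb, sub_eq_add_neg, EReal.bot_add, EReal.bot_add]; exact bot_le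
      · set c : PathSpace K → ℝ := fun x => (∑ t, φ t x) - z x with hcdef
        have hφC : ∀ t, memC K (φ t) := fun t => hmemc t (φ t) (hφE t)
        have hzC : memC K z := hS.A_subset z hz
        have hsumC : memC K (fun x => ∑ t, φ t x) := memC_sum _ _ hφC
        have hceq : c = fun x => (∑ t, φ t x) + -(z x) := by
          funext x; rw [hcdef]; ring
        have hcC : memC K c := by rw [hceq]; exact memC_add' hsumC (memC_neg hzC)
        have hlamc : lam c = (∑ t, lam (φ t)) + -(lam z) := by
          rw [hceq, lam_add' hlin hsumC (memC_neg hzC), lam_sum hlin _ _ hφC,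
            lam_neg hlin hzC]
        have h1 : PB K E U A c - ((lam c : ℝ) : EReal) ≤ Pstar K E U A lam := by
          simp only [Pstar]
          refine le_trans ?_ (le_iSup _ c)
          refine le_trans ?_ (le_iSup _ hcC)
          exact le_rfl
        have h2 : SU K U φ ≤ PB K E U A c := by
          simp only [PB, P]
          have hmem : φ ∈ Phi K E U (fun x => -(z x)) (fun x => ((c x : ℝ) : EReal)) := by
            refine ⟨hφE, hb, fun x => ?_⟩
            apply le_of_eq
            congr 1
          have hnz : -(fun x : PathSpace K => -(z x)) ∈ A := by
            have he : -(fun x : PathSpace K => -(z x)) = z := by funext x; simp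
            rw [he]; exact hz
          refine le_trans ?_ (le_iSup _ (fun x => -(z x)))
          refine le_trans ?_ (le_iSup _ hnz)
          refine le_trans ?_ (le_iSup _ φ)
          refine le_trans ?_ (le_iSup _ hmem)
          exact le_rfl
        have key : SU K U φ - ((lam c : ℝ) : EReal)
            = (SU K U φ - ((∑ t, lam (φ t) : ℝ) : EReal)) + ((lam z : ℝ) : EReal) := by
          rw [hlamc, er_sub_coe_add, neg_neg]
        calc (SU K U φ - ((∑ t, lam (φ t) : ℝ) : EReal)) + ((lam z : ℝ) : EReal)
            = SU K U φ - ((lam c : ℝ) : EReal) := key.symm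
          _ ≤ PB K E U A c - ((lam c : ℝ) : EReal) := EReal.sub_le_sub h2 le_rfl
          _ ≤ Pstar K E U A lam := h1
  · -- Part 2
    intro h1
    apply le_antisymm
    · simp only [SUstar]
      refine iSup_le fun φ => iSup_le fun hφE => ?_
      rw [er_sub_le_iff]
      simp only [SU]
      refine iSup_le fun β => ?_
      rw [er_sub_le_iff]
      set ψ : Fin (T + 1) → PathSpace K → ℝ := fun t => φ t + (fun _ => β t) with hψ
      have hψE : memE K E ψ := fun t => hS.E_add t (φ t) (hφE t) _ (hS.E_const t (β t))
      have hlamψ : ∀ t, lam (ψ t) = lam (φ t) + β t := by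
        intro t
        rw [hψ]
        rw [show lam (φ t + fun _ => β t) = lam (φ t) + lam (fun _ => β t) from
          hlin.1 (φ t) _ (hmemc t _ (hφE t)) (memC_const (β t))]
        congr 1
        have hsm := hlin.2.1 (β t) (fun _ => 1) (memC_const 1)
        have he : (β t) • (fun _ : PathSpace K => (1:ℝ)) = (fun _ : PathSpace K => β t) := by
          funext x; simp
        rw [he] at hsm
        rw [hsm, h1, mul_one]
      have hD : U ψ - ((∑ t, lam (ψ t) : ℝ) : EReal) ≤ Dlam K E U lam := by
        simp only [Dlam]
        refine le_trans ?_ (le_iSup _ ψ)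
        refine le_trans ?_ (le_iSup _ hψE)
        exact le_rfl
      have hsum : (∑ t, lam (ψ t)) = (∑ t, lam (φ t)) + (∑ t, β t) := by
        simp only [hlamψ]
        rw [Finset.sum_add_distrib]
      rw [hsum] at hD
      have hψeq : (fun t x => φ t x + β t) = ψ := rfl
      rw [hψeq]
      refine le_trans (er_sub_le_iff.mp hD) (le_of_eq ?_)
      rw [EReal.coe_add, ← add_assoc]
    · simp only [SUstar, Dlam]
      refine iSup_le fun φ => iSup_le fun hφE => ?_
      have hU : U φ ≤ SU K U φ := by
        simp only [SU]
        refine le_trans (le_of_eq ?_) (le_iSup _ (0 : Fin (T + 1) → ℝ))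
        simp
      refine le_trans (EReal.sub_le_sub hU le_rfl) ?_
      refine le_trans ?_ (le_iSup _ φ)
      refine le_trans ?_ (le_iSup _ hφE)
      exact le_rfl

end EMOT
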